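/- Let A_n be a compact subset of Q and let 𝒜_n = {(x,y) ∈ 𝕏 : x ∈ A_n and y_n > 0}. Then the closure of 𝒜_n in 𝕏 equals 𝒜_n ∪ (A_n × {0⃗}). -/

import Mathlib

/-!
The conditions `x ∈ A_n` (with `A_n` closed) and `y_m = 0` for all `m ≠ n` are closed, and
every point of `𝒜_n` satisfies them because it lies in `𝕏`; a point satisfying them either has
`y_n > 0` or `y = 0⃗`. Conversely `(x, 0⃗)` is the limit of `(x, t e_n) ∈ 𝒜_n` as `t → 0⁺`.
-/

open Set Topology

/-- The Hilbert cube `Q = ∏_{n ∈ ℕ} [0,1]`. -/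
abbrev Q : Type := ℕ → unitInterval

/-- `𝕏 = {(x,y) ∈ Q × Q : y_m ≠ 0 for at most one index m}`. -/
def XX : Set (Q × Q) := {p | {m : ℕ | p.2 m ≠ 0}.Subsingleton}

lemma snd_apply_eq_zero_of_mem_XX {p : Q × Q} (hp : p ∈ XX) {m n : ℕ} (hn : p.2 n ≠ 0)
    (hmn : m ≠ n) : p.2 m = 0 :=
  by_contra fun hm => hmn (hp hm hn)

lemma mk_single_mem_XX (x : Q) (n : ℕ) (t : unitInterval) : (x, Pi.single n t) ∈ XX :=
  (subsingleton_singleton (a := n)).anti fun m hm => by_contra fun hmn =>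
    hm (by simp [show m ≠ n from hmn])

lemma pos_or_eq_zero_of_forall_ne_eq_zero {ι : Type*} {y : ι → unitInterval} {n : ι}
    (hy : ∀ m ≠ n, y m = 0) : 0 < y n ∨ y = 0 := by
  rw [unitInterval.pos_iff_ne_zero, or_iff_not_imp_left, not_not]
  intro hn
  funext m
  rcases eq_or_ne m n with rfl | hmn
  exacts [hn, hy m hmn]

lemma mem_closure_of_snd_eq_zero {A : Set Q} {n : ℕ} {p : XX} (hx : (p : Q × Q).1 ∈ A)
    (hy : (p : Q × Q).2 = 0) : p ∈ closure {p : XX | (p : Q × Q).1 ∈ A ∧ 0 < (p : Q × Q).2 n} := by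
  let f : unitInterval → XX := fun t => ⟨((p : Q × Q).1, Pi.single n t), mk_single_mem_XX _ _ _⟩
  have hf : Continuous f :=
    (continuous_const.prodMk (continuous_single (A := fun _ : ℕ => unitInterval) n)).subtype_mk _
  have hf0 : f 0 = p := Subtype.ext (Prod.ext rfl (by simpa [f] using hy.symm))
  have h0 : (0 : unitInterval) ∈ closure (Ioi (0 : unitInterval)) := by
    rw [closure_Ioi' ⟨1, by simp⟩]
    exact mem_Ici.2 le_rfl
  rw [← hf0]
  refine closure_mono ?_ (mem_closure_image hf.continuousAt h0)
  rintro _ ⟨t, ht, rfl⟩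
  exact ⟨hx, by simpa [f] using ht⟩

/-- for a compact `A_n ⊆ Q` and
`𝒜_n = {(x,y) ∈ 𝕏 : x ∈ A_n and y_n > 0}`, the closure of `𝒜_n` in `𝕏` is
`𝒜_n ∪ (A_n × {0⃗})`. -/
theorem closure_An_in_XX (n : ℕ) (An : Set Q) (hAn : IsCompact An) :
    closure {p : ↥XX | (p : Q × Q).1 ∈ An ∧ 0 < (p : Q × Q).2 n} =
      {p : ↥XX | (p : Q × Q).1 ∈ An ∧ 0 < (p : Q × Q).2 n} ∪
      {p : ↥XX | (p : Q × Q).1 ∈ An ∧ (p : Q × Q).2 = 0} := by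
  have hclosed : IsClosed {p : XX | (p : Q × Q).1 ∈ An ∧ ∀ m ≠ n, (p : Q × Q).2 m = 0} :=
    (hAn.isClosed.preimage continuous_subtype_val.fst).inter
      ((isClosed_set_pi (i := {m | m ≠ n}) fun _ _ => isClosed_singleton).preimage
        continuous_subtype_val.snd)
  apply subset_antisymm
  · have hsub : closure {p : ↥XX | (p : Q × Q).1 ∈ An ∧ 0 < (p : Q × Q).2 n} ⊆
        {p : XX | (p : Q × Q).1 ∈ An ∧ ∀ m ≠ n, (p : Q × Q).2 m = 0} :=
      closure_minimal (fun p hp => ⟨hp.1, fun m hm =>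
        snd_apply_eq_zero_of_mem_XX p.2 hp.2.ne' hm⟩) hclosed
    intro p hp
    obtain ⟨hx, hy⟩ := hsub hp
    rcases pos_or_eq_zero_of_forall_ne_eq_zero hy with hn | hy
    exacts [Or.inl ⟨hx, hn⟩, Or.inr ⟨hx, hy⟩]
  · rintro p (hp | ⟨hx, hy⟩)
    exacts [subset_closure hp, mem_closure_of_snd_eq_zero hx hy]
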